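/- arXiv:1707.09789 — 2 statements merged into one kernel-verified Lean document; each statement's English description precedes it below -/
import Mathlib

section
/- In the greedy LZ77 parsing of a string, all phrases except possibly the last one are pairwise distinct (as strings). -/
/-- Starting (0-indexed) position of the `i`-th phrase of a parsing. -/
def startPos {α : Type*} (ps : List (List α)) (i : ℕ) : ℕ :=
  ((ps.take i).flatten).length

/-- An LZ77 parsing of `s`: phrases are nonempty, concatenate to `s`, and every
phrase is either a single letter, or its prefix missing the last letter occurs
in `s` starting strictly before the phrase's start. -/
def IsLZ77Parsing {α : Type*} (s : List α) (ps : List (List α)) : Prop :=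
  ps.flatten = s ∧ (∀ p ∈ ps, p ≠ []) ∧
  ∀ i : Fin ps.length, (ps.get i).length = 1 ∨
    (1 < (ps.get i).length ∧
      ∃ j < startPos ps i, (ps.get i).dropLast <+: s.drop j)

/-- A greedy LZ77 parsing: an LZ77 parsing in which every phrase is as long as
possible, i.e. no strictly longer phrase fitting in `s` would be admissible. -/
def IsGreedyLZ77Parsing {α : Type*} (s : List α) (ps : List (List α)) : Prop :=
  IsLZ77Parsing s ps ∧
  ∀ i : Fin ps.length, ∀ L : ℕ, (ps.get i).length < L →
    startPos ps i + L ≤ s.length →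
    ¬ ∃ j < startPos ps i, (s.drop (startPos ps i)).take (L - 1) <+: s.drop j

/-!
If two phrases `pᵢ = pⱼ` with `i < j` coincided, then `pⱼ` would already occur at the start of
`pᵢ`, strictly before position `startPos j`. Unless `pⱼ` is the last phrase, the phrase `pⱼ`
extended by the next letter of `s` would then be admissible, contradicting greediness.
-/

section

variable {α : Type*}

lemma startPos_length (ps : List (List α)) : startPos ps ps.length = ps.flatten.length := by
  rw [startPos, List.take_length]

lemma startPos_succ (ps : List (List α)) (i : Fin ps.length) :
    startPos ps (i + 1) = startPos ps i + (ps.get i).length := by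
  rw [startPos, List.take_add_one]
  simp [startPos]

lemma startPos_mono (ps : List (List α)) : Monotone (startPos ps) :=
  fun _ _ hik => (List.take_prefix_take_left hik).flatten.length_le

lemma startPos_lt_startPos {ps : List (List α)} (hne : ∀ p ∈ ps, p ≠ []) {i k : ℕ}
    (hi : i < ps.length) (hik : i < k) : startPos ps i < startPos ps k := by
  have hpos : 0 < (ps.get ⟨i, hi⟩).length :=
    List.length_pos_iff.mpr (hne _ (List.get_mem ps _))
  have hsucc : startPos ps (i + 1) = startPos ps i + (ps.get ⟨i, hi⟩).length :=
    startPos_succ ps ⟨i, hi⟩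
  have hmono : startPos ps (i + 1) ≤ startPos ps k := startPos_mono ps hik
  omega

lemma flatten_drop_startPos (ps : List (List α)) (i : ℕ) :
    ps.flatten.drop (startPos ps i) = (ps.drop i).flatten := by
  have hsplit : ps.flatten = (ps.take i).flatten ++ (ps.drop i).flatten := by
    rw [← List.flatten_append, List.take_append_drop]
  rw [hsplit, startPos, List.drop_left]

lemma flatten_drop_startPos_eq_get_append (ps : List (List α)) (k : Fin ps.length) :
    ps.flatten.drop (startPos ps k) = ps.get k ++ (ps.drop (k + 1)).flatten := by
  rw [flatten_drop_startPos, List.drop_eq_getElem_cons k.isLt, List.flatten_cons]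
  rfl

lemma startPos_add_length_lt {ps : List (List α)} (hne : ∀ p ∈ ps, p ≠ [])
    (j : Fin ps.length) (hj : (j : ℕ) + 1 < ps.length) :
    startPos ps j + (ps.get j).length < ps.flatten.length := by
  rw [← startPos_succ, ← startPos_length]
  exact startPos_lt_startPos hne hj hj

lemma IsGreedyLZ77Parsing.get_ne_get_of_lt {s : List α} {ps : List (List α)}
    (h : IsGreedyLZ77Parsing s ps) {i j : Fin ps.length} (hij : i < j)
    (hj : (j : ℕ) + 1 < ps.length) : ps.get i ≠ ps.get j := by
  intro heq
  obtain ⟨⟨rfl, hne, -⟩, hgreedy⟩ := h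
  refine hgreedy j ((ps.get j).length + 1) (Nat.lt_succ_self _)
    (startPos_add_length_lt hne j hj) ⟨startPos ps i, startPos_lt_startPos hne i.isLt hij, ?_⟩
  rw [Nat.add_sub_cancel, flatten_drop_startPos_eq_get_append, List.take_left,
    flatten_drop_startPos_eq_get_append, ← heq]
  exact List.prefix_append _ _

end

/-- All phrases of a greedy LZ77 parsing, except possibly the last one,
are pairwise distinct. -/
theorem greedy_phrases_distinct {α : Type*} (s : List α) (ps : List (List α))
    (h : IsGreedyLZ77Parsing s ps) :
    ∀ i j : Fin ps.length, (i : ℕ) < ps.length - 1 → (j : ℕ) < ps.length - 1 →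
      i ≠ j → ps.get i ≠ ps.get j := by
  intro i j hi hj hij
  rcases lt_or_gt_of_ne hij with hlt | hlt
  · exact h.get_ne_get_of_lt hlt (by omega)
  · exact (h.get_ne_get_of_lt hlt (by omega)).symm
end

section
/- If a phrase f of an LZ77 parsing of s contains, strictly inside its prefix f[1..|f|−1], an entire phrase f′ of the greedy LZ77 parsing of s as a proper substring (with at least one letter of the greedy parsing before and after f′ inside f[1..|f|−1]), then the greedy parsing is not maximal at f′: the greedy procedure could have chosen a strictly longer phrase in place of f′. Hence this configuration cannot occur. -/
/-! The copyable prefix of `f` (all of `f` but its last letter) has an earlier copy in `s`.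
The greedy phrase `f′` and the letter after it lie inside that prefix, so shifting the copy by
the offset of `f′` in `f` gives an earlier copy of `f′` followed by its next letter: the greedy
parsing could have chosen a phrase of length `|f′| + 2` at the position of `f′`. -/

theorem List.take_drop_add_prefix_drop_add {α : Type*} {s : List α} {a j n d k : ℕ}
    (h : (s.drop a).take n <+: s.drop j) (hk : d + k ≤ n) :
    (s.drop (a + d)).take k <+: s.drop (j + d) := by
  have hshift := h.drop d
  rw [List.drop_take, List.drop_drop, List.drop_drop] at hshift
  exact (List.take_prefix_take_left (by omega)).trans hshift

section Parsing

variable {α : Type*}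

theorem flatten_take_append_get_prefix (ps : List (List α)) (i : Fin ps.length) :
    (ps.take i).flatten ++ ps.get i <+: ps.flatten := by
  have h := (List.take_prefix (i + 1) ps).flatten
  rwa [List.take_add_one, List.getElem?_eq_getElem i.isLt, Option.toList_some,
    List.flatten_append, List.flatten_singleton] at h

theorem get_prefix_drop_startPos (ps : List (List α)) (i : Fin ps.length) :
    ps.get i <+: ps.flatten.drop (startPos ps i) := by
  simpa [startPos] using (flatten_take_append_get_prefix ps i).drop (startPos ps i)

theorem startPos_add_length_le (ps : List (List α)) (i : Fin ps.length) :
    startPos ps i + (ps.get i).length ≤ ps.flatten.length := by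
  simpa [startPos] using (flatten_take_append_get_prefix ps i).length_le

theorem IsLZ77Parsing.exists_copy_before {s : List α} {ps : List (List α)}
    (h : IsLZ77Parsing s ps) (i : Fin ps.length) (hi : 2 ≤ (ps.get i).length) :
    ∃ j < startPos ps i,
      (s.drop (startPos ps i)).take ((ps.get i).length - 1) <+: s.drop j := by
  obtain ⟨hflat, -, hcopy⟩ := h
  rcases hcopy i with hone | ⟨-, j, hj, hpre⟩
  · omega
  have hdropLast := List.prefix_iff_eq_take.mp
    ((List.dropLast_prefix _).trans (get_prefix_drop_startPos ps i))
  rw [List.length_dropLast, hflat] at hdropLast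
  exact ⟨j, hj, hdropLast ▸ hpre⟩

end Parsing

/-- A phrase of the greedy LZ77 parsing cannot lie strictly inside the
copyable prefix $f[1..|f|-1]$ of a phrase $f$ of another LZ77 parsing, with at
least one letter before it and one letter of that prefix after it. -/
theorem no_greedy_phrase_strictly_inside {α : Type*} (s : List α)
    (ps qs : List (List α))
    (hps : IsGreedyLZ77Parsing s ps) (hqs : IsLZ77Parsing s qs)
    (i : Fin qs.length) (j : Fin ps.length)
    (hleft : startPos qs i + 1 ≤ startPos ps j)
    (hright : startPos ps j + (ps.get j).length + 2 ≤ startPos qs i + (qs.get i).length) :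
    False := by
  obtain ⟨j', hj', hcopy⟩ := hqs.exists_copy_before i (by omega)
  have hfits := startPos_add_length_le qs i
  rw [hqs.1] at hfits
  have hlonger := List.take_drop_add_prefix_drop_add (d := startPos ps j - startPos qs i)
    (k := (ps.get j).length + 1) hcopy (by omega)
  rw [Nat.add_sub_cancel' (by omega)] at hlonger
  exact hps.2 j ((ps.get j).length + 2) (by omega) (by omega) ⟨_, by omega, hlonger⟩
end
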